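/- arXiv:math/0503448 — 6 statements merged into one kernel-verified Lean document; each statement's English description precedes it below -/
import Mathlib

section
/- Let S be a semiring, A ∈ S^{n×n}, B ∈ S^{n×q}, and let K ⊆ S^n be a subsemimodule. Define X₁ = K and X_{r+1} = φ(X_r) for r ≥ 1. Then the sequence (X_r) is decreasing, i.e. X_{r+1} ⊆ X_r for all r ≥ 1. Moreover, setting X_ω = ⋂_{r≥1} X_r, every geometrically (A,B)-invariant subsemimodule of S^n contained in K is contained in X_ω; in particular K* ⊆ X_ω. -/
/-- A subsemimodule `X ⊆ Sⁿ` is geometrically `(A,B)`-invariant if for every `x ∈ X`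
there exists a control `u ∈ S^q` with `Ax + Bu ∈ X`. -/
def GeomInv {S : Type*} [Semiring S] {n q : ℕ} (A : Matrix (Fin n) (Fin n) S)
    (B : Matrix (Fin n) (Fin q) S) (X : Set (Fin n → S)) : Prop :=
  ∀ x ∈ X, ∃ u : Fin q → S, A.mulVec x + B.mulVec u ∈ X

/-- `Kstar A B K`: initial states steerable so as to remain in `K` forever. -/
def Kstar {S : Type*} [Semiring S] {n q : ℕ} (A : Matrix (Fin n) (Fin n) S)
    (B : Matrix (Fin n) (Fin q) S) (K : Set (Fin n → S)) : Set (Fin n → S) :=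
  {x₀ | ∃ (u : ℕ → Fin q → S) (x : ℕ → Fin n → S),
    x 0 = x₀ ∧ (∀ k : ℕ, x (k + 1) = A.mulVec (x k) + B.mulVec (u (k + 1))) ∧
    ∀ k : ℕ, x k ∈ K}

/-- `Im B`: the subsemimodule of `Sⁿ` generated by the columns of `B`. -/
def ImB {S : Type*} [Semiring S] {n q : ℕ} (B : Matrix (Fin n) (Fin q) S) :
    Set (Fin n → S) :=
  {v | ∃ u : Fin q → S, v = B.mulVec u}

/-- `Z ⊖ Y = {u : ∃ y ∈ Y, u + y ∈ Z}`. -/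
def Ominus {S : Type*} [Semiring S] {n : ℕ} (Z Y : Set (Fin n → S)) : Set (Fin n → S) :=
  {u | ∃ y ∈ Y, u + y ∈ Z}

/-- `A⁻¹(Y) = {u : Au ∈ Y}`. -/
def PreA {S : Type*} [Semiring S] {n : ℕ} (A : Matrix (Fin n) (Fin n) S)
    (Y : Set (Fin n → S)) : Set (Fin n → S) :=
  {u | A.mulVec u ∈ Y}

/-- `φ(X) = X ∩ A⁻¹(X ⊖ Im B)`. -/
def Phi {S : Type*} [Semiring S] {n q : ℕ} (A : Matrix (Fin n) (Fin n) S)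
    (B : Matrix (Fin n) (Fin q) S) (X : Set (Fin n → S)) : Set (Fin n → S) :=
  X ∩ PreA A (Ominus X (ImB B))

/-- The sequence `X₁ = K`, `X_{r+1} = φ(X_r)`; here `Xseq A B K r` is `X_{r+1}`,
so that `Xseq A B K 0 = X₁ = K`. -/
def Xseq {S : Type*} [Semiring S] {n q : ℕ} (A : Matrix (Fin n) (Fin n) S)
    (B : Matrix (Fin n) (Fin q) S) (K : Set (Fin n → S)) : ℕ → Set (Fin n → S)
  | 0 => K
  | r + 1 => Phi A B (Xseq A B K r)

/-!
A geometrically `(A,B)`-invariant `X` satisfies `X ⊆ φ(X)`, and `φ` is monotone; so an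
invariant `X ⊆ K = X₁` stays below every `X_r` by induction. The steerable set `K*` is itself
invariant (shift an admissible trajectory by one step) and lies in `K`.
-/

section

variable {S : Type*} [Semiring S] {n q : ℕ}
  (A : Matrix (Fin n) (Fin n) S) (B : Matrix (Fin n) (Fin q) S)

theorem phi_mono : Monotone (Phi A B) := by
  rintro X Y hXY x ⟨hx, y, hy, hAxy⟩
  exact ⟨hXY hx, y, hy, hXY hAxy⟩

theorem xseq_succ_subset (K : Set (Fin n → S)) (r : ℕ) : Xseq A B K (r + 1) ⊆ Xseq A B K r :=
  Set.inter_subset_left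

variable {A B}

theorem GeomInv.subset_phi {X : Set (Fin n → S)} (hX : GeomInv A B X) : X ⊆ Phi A B X := by
  intro x hx
  obtain ⟨u, hu⟩ := hX x hx
  exact ⟨hx, B.mulVec u, ⟨u, rfl⟩, hu⟩

theorem GeomInv.subset_iInter_xseq {X K : Set (Fin n → S)} (hX : GeomInv A B X)
    (hXK : X ⊆ K) : X ⊆ ⋂ r, Xseq A B K r := by
  refine Set.subset_iInter fun r => ?_
  induction r with
  | zero => exact hXK
  | succ r ih => exact hX.subset_phi.trans (phi_mono A B ih)

theorem kstar_subset (K : Set (Fin n → S)) : Kstar A B K ⊆ K := by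
  rintro _ ⟨_, x, rfl, _, hxK⟩
  exact hxK 0

theorem geomInv_kstar (K : Set (Fin n → S)) : GeomInv A B (Kstar A B K) := by
  rintro _ ⟨u, x, rfl, hx, hxK⟩
  refine ⟨u 1, fun k => u (k + 1), fun k => x (k + 1), hx 0, fun k => hx (k + 1),
    fun k => hxK (k + 1)⟩

end

/-- The sequence `(X_r)` is decreasing; every geometrically `(A,B)`-invariant
subsemimodule of `Sⁿ` contained in `K` is contained in `X_ω = ⋂_r X_r`; in particular
`K* ⊆ X_ω`. -/
theorem xseq_decreasing_and_xomega_upper_bound {S : Type*} [Semiring S] {n q : ℕ}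
    (A : Matrix (Fin n) (Fin n) S) (B : Matrix (Fin n) (Fin q) S)
    (K : Submodule S (Fin n → S)) :
    (∀ r : ℕ, Xseq A B (K : Set (Fin n → S)) (r + 1) ⊆ Xseq A B (K : Set (Fin n → S)) r) ∧
    (∀ X : Submodule S (Fin n → S),
      GeomInv A B (X : Set (Fin n → S)) → (X : Set (Fin n → S)) ⊆ (K : Set (Fin n → S)) →
      (X : Set (Fin n → S)) ⊆ ⋂ r : ℕ, Xseq A B (K : Set (Fin n → S)) r) ∧
    Kstar A B (K : Set (Fin n → S)) ⊆ ⋂ r : ℕ, Xseq A B (K : Set (Fin n → S)) r :=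
  ⟨xseq_succ_subset A B K, fun _ hX hXK => hX.subset_iInter_xseq hXK,
    (geomInv_kstar (K : Set (Fin n → S))).subset_iInter_xseq (kstar_subset _)⟩
end

section
/- Let S be a semiring, A ∈ S^{n×n}, B ∈ S^{n×q}, and let K ⊆ S^n be a subsemimodule. Define X₁ = K and X_{r+1} = φ(X_r). If there exists k ≥ 1 such that X_{k+1} = X_k, then K* = X_k; in particular X_k is then the maximal geometrically (A,B)-invariant semimodule contained in K. -/
/-!
`K*` is geometrically `(A,B)`-invariant (shift a trajectory by one step) and lies in `K`, while
every geometrically invariant `X ⊆ K` lies in `K*` (iterate a choice of controls) and, by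
induction on `r`, in every `X_r`. Stabilization `φ(X_k) = X_k` says exactly that `X_k` is
geometrically invariant, so `K*` and `X_k` are both the largest such set inside `K`.
-/

open scoped Matrix

section

variable {S : Type*} [Semiring S] {n q : ℕ} {A : Matrix (Fin n) (Fin n) S}
  {B : Matrix (Fin n) (Fin q) S} {K X : Set (Fin n → S)}

theorem mem_Phi_iff {x : Fin n → S} :
    x ∈ Phi A B X ↔ x ∈ X ∧ ∃ u, A *ᵥ x + B *ᵥ u ∈ X := by
  constructor
  · rintro ⟨hx, _, ⟨u, rfl⟩, hu⟩
    exact ⟨hx, u, hu⟩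
  · rintro ⟨hx, u, hu⟩
    exact ⟨hx, B *ᵥ u, ⟨u, rfl⟩, hu⟩

theorem geomInv_of_Phi_eq (h : Phi A B X = X) : GeomInv A B X := fun _ hx =>
  (mem_Phi_iff.mp (h.symm ▸ hx)).2

theorem Kstar_subset : Kstar A B K ⊆ K := by
  rintro _ ⟨_, _, rfl, _, hxK⟩
  exact hxK 0

theorem geomInv_Kstar : GeomInv A B (Kstar A B K) := by
  rintro x₀ ⟨u, x, rfl, hstep, hxK⟩
  refine ⟨u 1, ?_⟩
  rw [← hstep 0]
  exact ⟨fun m => u (m + 1), fun m => x (m + 1), rfl, fun m => hstep (m + 1),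
    fun m => hxK (m + 1)⟩

theorem GeomInv.subset_Kstar (hX : GeomInv A B X) (hXK : X ⊆ K) : X ⊆ Kstar A B K := by
  intro x₀ hx₀
  choose! control hcontrol using hX
  let x : ℕ → Fin n → S := fun m => (fun y => A *ᵥ y + B *ᵥ control y)^[m] x₀
  have hxX : ∀ m, x m ∈ X := fun m => Set.MapsTo.iterate hcontrol m hx₀
  refine ⟨fun m => control (x (m - 1)), x, rfl, fun m => ?_, fun m => hXK (hxX m)⟩
  simp only [x, Function.iterate_succ_apply', Nat.add_sub_cancel]

theorem Xseq_subset : ∀ r, Xseq A B K r ⊆ K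
  | 0 => subset_rfl
  | r + 1 => Set.inter_subset_left.trans (Xseq_subset r)

theorem GeomInv.subset_Xseq (hX : GeomInv A B X) (hXK : X ⊆ K) : ∀ r, X ⊆ Xseq A B K r
  | 0 => hXK
  | r + 1 => fun x hx =>
    let ⟨u, hu⟩ := hX x hx
    mem_Phi_iff.mpr ⟨hX.subset_Xseq hXK r hx, u, hX.subset_Xseq hXK r hu⟩

end

/-- If the sequence `X₁ = K`, `X_{r+1} = φ(X_r)` stabilizes, i.e. `X_{k+1} = X_k` for
some `k ≥ 1` (here `Xseq A B K k` plays the role of `X_{k+1}`), then `K* = X_k`; in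
particular `X_k` is then the maximal geometrically `(A,B)`-invariant semimodule
contained in `K`. -/
theorem kstar_eq_of_stabilizes {S : Type*} [Semiring S] {n q : ℕ}
    (A : Matrix (Fin n) (Fin n) S) (B : Matrix (Fin n) (Fin q) S)
    (K : Submodule S (Fin n → S)) (k : ℕ)
    (h : Xseq A B (K : Set (Fin n → S)) (k + 1) = Xseq A B (K : Set (Fin n → S)) k) :
    Kstar A B (K : Set (Fin n → S)) = Xseq A B (K : Set (Fin n → S)) k ∧
    Xseq A B (K : Set (Fin n → S)) k ⊆ (K : Set (Fin n → S)) ∧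
    GeomInv A B (Xseq A B (K : Set (Fin n → S)) k) ∧
    ∀ X : Submodule S (Fin n → S),
      GeomInv A B (X : Set (Fin n → S)) → (X : Set (Fin n → S)) ⊆ (K : Set (Fin n → S)) →
      (X : Set (Fin n → S)) ⊆ Xseq A B (K : Set (Fin n → S)) k := by
  have hinv : GeomInv A B (Xseq A B (K : Set (Fin n → S)) k) := geomInv_of_Phi_eq h
  refine ⟨?_, Xseq_subset k, hinv, fun X hX hXK => hX.subset_Xseq hXK k⟩
  exact (geomInv_Kstar.subset_Xseq Kstar_subset k).antisymm
    (hinv.subset_Kstar (Xseq_subset k))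
end

section
/- Every finitely generated subsemimodule of ℕ_min^n is compact: if Q ∈ ℕ_min^{n×p} is a matrix and X = Im Q is the set of all tropical linear combinations of the columns of Q, then X is a compact subset of ℕ_min^n for the product of the metric topologies. -/
/-- `exp(−x)` on `ℕ_min = ℕ ∪ {+∞}`, with `exp(−(+∞)) = 0`. -/
noncomputable def expNeg : WithTop ℕ → ℝ :=
  fun x => WithTop.recTopCoe 0 (fun m : ℕ => Real.exp (-(m : ℝ))) x

/-- The topology on `ℕ_min` of the metric `d(x,y) = |exp(−x) − exp(−y)|`; it is the
topology induced by the isometric embedding `expNeg : ℕ_min → ℝ`. -/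
noncomputable def nminTop : TopologicalSpace (WithTop ℕ) :=
  TopologicalSpace.induced expNeg inferInstance

/-- The product of the metric topologies on `ℕ_min^n`. -/
noncomputable def nminPiTop (n : ℕ) : TopologicalSpace (Fin n → WithTop ℕ) :=
  @Pi.topologicalSpace (Fin n) (fun _ => WithTop ℕ) (fun _ => nminTop)

/-- The tropical matrix–vector product over `ℕ_min`: `(Qy)_i = min_j (Q_{ij} + y_j)`. -/
def minMulVec {n p : ℕ} (Q : Matrix (Fin n) (Fin p) (WithTop ℕ))
    (y : Fin p → WithTop ℕ) : Fin n → WithTop ℕ :=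
  fun i => Finset.univ.inf fun j => Q i j + y j

/-!
`expNeg` embeds `ℕ_min` topologically onto `{0} ∪ {e^{-m} | m ∈ ℕ}`, a convergent sequence
together with its limit, so `ℕ_min` is compact and so is `ℕ_min^p`. Since `expNeg` turns `+`
into `*` and `min` into `max`, addition and `min` are continuous on `ℕ_min`; hence `y ↦ Qy` is
continuous and `Im Q` is a continuous image of the compact space `ℕ_min^p`.
-/

open Topology

attribute [local instance] nminTop

@[simp] lemma expNeg_top : expNeg ⊤ = 0 := rfl

@[simp] lemma expNeg_coe (m : ℕ) : expNeg m = Real.exp (-m) := rfl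

lemma expNeg_add (a b : WithTop ℕ) : expNeg (a + b) = expNeg a * expNeg b := by
  cases a with
  | top => simp
  | coe m =>
    cases b with
    | top => simp
    | coe k =>
      change Real.exp (-((m + k : ℕ) : ℝ)) = Real.exp (-m) * Real.exp (-k)
      rw [← Real.exp_add, Nat.cast_add, neg_add]

lemma antitone_expNeg : Antitone expNeg := by
  intro a b hab
  cases b with
  | top => cases a <;> simp [(Real.exp_pos _).le]
  | coe k =>
    lift a to ℕ using ne_top_of_le_ne_top WithTop.coe_ne_top hab
    simpa using (WithTop.coe_le_coe.1 hab : a ≤ k)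

lemma expNeg_min (a b : WithTop ℕ) : expNeg (min a b) = max (expNeg a) (expNeg b) :=
  antitone_expNeg.map_min

lemma isInducing_expNeg : IsInducing expNeg := ⟨rfl⟩

lemma range_expNeg : Set.range expNeg = insert 0 (Set.range fun m : ℕ => Real.exp (-m)) := by
  ext x
  constructor
  · rintro ⟨a, rfl⟩
    cases a with
    | top => exact Or.inl rfl
    | coe m => exact Or.inr ⟨m, rfl⟩
  · rintro (rfl | ⟨m, rfl⟩)
    exacts [⟨⊤, rfl⟩, ⟨m, rfl⟩]

lemma compactSpace_nminTop : CompactSpace (WithTop ℕ) := by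
  refine ⟨isInducing_expNeg.isCompact_iff.2 ?_⟩
  rw [Set.image_univ, range_expNeg]
  exact Filter.Tendsto.isCompact_insert_range <| by
    simpa using tendsto_natCast_atTop_atTop (R := ℝ)

lemma continuousAdd_nminTop : ContinuousAdd (WithTop ℕ) where
  continuous_add := isInducing_expNeg.continuous_iff.2 <| by
    simp only [Function.comp_def, expNeg_add]
    fun_prop

lemma continuousInf_nminTop : ContinuousInf (WithTop ℕ) where
  continuous_inf := isInducing_expNeg.continuous_iff.2 <| by
    simp only [Function.comp_def, expNeg_min]
    fun_prop

attribute [local instance] continuousAdd_nminTop continuousInf_nminTop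

lemma continuous_minMulVec {n p : ℕ} (Q : Matrix (Fin n) (Fin p) (WithTop ℕ)) :
    Continuous (minMulVec Q) :=
  continuous_pi fun _ =>
    Continuous.finset_inf_apply fun j _ => continuous_const.add (continuous_apply j)

/-- Every finitely generated subsemimodule of `ℕ_min^n` is compact: for any matrix
`Q ∈ ℕ_min^{n×p}`, the set `Im Q` of all tropical linear combinations of the columns of
`Q` is compact in `ℕ_min^n` for the product of the metric topologies. -/
theorem imQ_isCompact {n p : ℕ} (Q : Matrix (Fin n) (Fin p) (WithTop ℕ)) :
    @IsCompact (Fin n → WithTop ℕ) (nminPiTop n)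
      {x : Fin n → WithTop ℕ | ∃ y : Fin p → WithTop ℕ, x = minMulVec Q y} := by
  have := compactSpace_nminTop
  have hIm : {x : Fin n → WithTop ℕ | ∃ y, x = minMulVec Q y} = Set.range (minMulVec Q) :=
    Set.ext fun _ => exists_congr fun _ => eq_comm
  rw [hIm]
  exact isCompact_range (continuous_minMulVec Q)
end

section
/- Let A ∈ ℤ_max^{r×n} and let Y ⊆ ℤ_max^n be a subsemimodule. Then vol(A·Y) ≤ vol(Y), where A·Y = {Ay : y ∈ Y}. In particular, for any matrix B ∈ ℤ_max^{n×p}, vol(Im(AB)) ≤ vol(Im B). -/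
/-- The max-plus matrix–vector product over `ℤ_max = (ℤ ∪ {−∞}, max, +)`:
`(Ax)_i = max_j (A_{ij} + x_j)`. -/
def maxMulVec {m k : ℕ} (A : Matrix (Fin m) (Fin k) (WithBot ℤ))
    (x : Fin k → WithBot ℤ) : Fin m → WithBot ℤ :=
  fun i => Finset.univ.sup fun j => A i j + x j

/-- The max-plus matrix product: `(AB)_{ij} = max_t (A_{it} + B_{tj})`. -/
def maxMatMul {m k l : ℕ} (A : Matrix (Fin m) (Fin k) (WithBot ℤ))
    (B : Matrix (Fin k) (Fin l) (WithBot ℤ)) : Matrix (Fin m) (Fin l) (WithBot ℤ) :=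
  Matrix.of fun i j => Finset.univ.sup fun t => A i t + B t j

/-- `Im A`: the subsemimodule generated by the columns of `A`, i.e. the set of all
max-plus linear combinations `Ay` of the columns of `A`. -/
def ImM {m k : ℕ} (A : Matrix (Fin m) (Fin k) (WithBot ℤ)) : Set (Fin m → WithBot ℤ) :=
  {v | ∃ y : Fin k → WithBot ℤ, v = maxMulVec A y}

/-- A subsemimodule of `ℤ_max^m`: contains `(−∞,…,−∞)`, is closed under entrywise max,
and under addition of a scalar `λ ∈ ℤ ∪ {−∞}` to all entries. -/
def IsSubsemimodule {m : ℕ} (X : Set (Fin m → WithBot ℤ)) : Prop :=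
  (fun _ => ⊥) ∈ X ∧ (∀ x ∈ X, ∀ y ∈ X, x ⊔ y ∈ X) ∧
    ∀ (c : WithBot ℤ), ∀ x ∈ X, (fun i => c + x i) ∈ X

/-- The volume of a subset of `ℤ_max^m`: the cardinality (in `ℕ ∪ {∞}`) of the set
of its elements `x` with `max_i x_i = 0`. -/
noncomputable def vol {m : ℕ} (X : Set (Fin m → WithBot ℤ)) : ℕ∞ :=
  {x ∈ X | Finset.univ.sup x = (0 : WithBot ℤ)}.encard

/-!
Normalising a point `x ≠ −∞` of `ℤ_max^m` means subtracting `max_i x_i` from every entry.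
A max-plus linear map commutes with adding a scalar, so every normalised point `Ay` of
`A·Y` is the normalisation of `Ay'`, where `y'` is the normalisation of `y`; since `Y` is
closed under adding scalars, `y'` again lies in `Y`. Thus the normalised part of `A·Y` is
the image of the normalised part of `Y` under `y ↦ normalise(Ay)`.
Finally `Im(AB) = A·Im B`, and `Im B` is closed under adding scalars.
-/

open Finset

lemma WithBot.add_finsetSup {ι : Type*} (a : WithBot ℤ) (s : Finset ι) (f : ι → WithBot ℤ) :
    a + s.sup f = s.sup fun i => a + f i :=
  apply_sup_eq_sup_comp_of_linearOrder (a + ·) (fun _ _ h => add_le_add_right h a)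
    (WithBot.add_bot a)

lemma WithBot.finsetSup_add {ι : Type*} (a : WithBot ℤ) (s : Finset ι) (f : ι → WithBot ℤ) :
    s.sup f + a = s.sup fun i => f i + a := by
  simp only [add_comm _ a, WithBot.add_finsetSup]

section NormalizeMax

variable {m : ℕ}

/-- The all-`⊥` vector, whose maximum is not an integer, is left unchanged. -/
def normalizeMax (x : Fin m → WithBot ℤ) : Fin m → WithBot ℤ :=
  fun i => ((-(univ.sup x).unbotD 0 : ℤ) : WithBot ℤ) + x i

lemma normalizeMax_of_sup_eq_zero {x : Fin m → WithBot ℤ} (hx : univ.sup x = 0) :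
    normalizeMax x = x := by
  funext i
  simp [normalizeMax, hx]

lemma normalizeMax_const_add (c : ℤ) (x : Fin m → WithBot ℤ) :
    normalizeMax (fun i => (c : WithBot ℤ) + x i) = normalizeMax x := by
  cases hx : univ.sup x using WithBot.recBotCoe with
  | bot =>
    have hbot : ∀ i, x i = ⊥ := fun i => (Finset.sup_eq_bot_iff _ _).1 hx i (mem_univ i)
    obtain rfl : x = fun _ => ⊥ := funext hbot
    simp
  | coe d =>
    funext i
    have hsup : univ.sup (fun i => (c : WithBot ℤ) + x i) = ((c + d : ℤ) : WithBot ℤ) := by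
      rw [← WithBot.add_finsetSup, hx, WithBot.coe_add]
    simp only [normalizeMax, hsup, hx, WithBot.unbotD_coe, ← add_assoc, ← WithBot.coe_add]
    congr 2
    ring

end NormalizeMax

lemma vol_image_le_of_const_add {m n : ℕ}
    (f : (Fin n → WithBot ℤ) → (Fin m → WithBot ℤ))
    (hf : ∀ (c : WithBot ℤ) y, f (fun j => c + y j) = fun i => c + f y i)
    (X : Set (Fin n → WithBot ℤ)) (hX : ∀ c : ℤ, ∀ x ∈ X, (fun i => (c : WithBot ℤ) + x i) ∈ X) :
    vol (f '' X) ≤ vol X := by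
  suffices h : {v ∈ f '' X | univ.sup v = 0} ⊆ (normalizeMax ∘ f) '' {x ∈ X | univ.sup x = 0} from
    (Set.encard_le_encard h).trans (Set.encard_image_le _ _)
  rintro v ⟨⟨y, hyX, rfl⟩, hfy⟩
  obtain ⟨c, hc⟩ : ∃ c : ℤ, (c : WithBot ℤ) = univ.sup y := by
    refine WithBot.ne_bot_iff_exists.1 fun hy => ?_
    -- `y` is the all-`⊥` vector, which is `⊥ + y`, so `f y = ⊥ + f y` as well.
    have hyb : y = fun j => ⊥ + y j := by
      funext j
      simp [(Finset.sup_eq_bot_iff _ _).1 hy j (mem_univ j)]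
    rw [hyb, hf, ← WithBot.add_finsetSup, WithBot.bot_add] at hfy
    exact WithBot.bot_ne_zero hfy
  set y' : Fin n → WithBot ℤ := fun j => ((-c : ℤ) : WithBot ℤ) + y j
  have hy : y = fun j => (c : WithBot ℤ) + y' j := by
    funext j
    simp only [y', ← add_assoc, ← WithBot.coe_add, add_neg_cancel, WithBot.coe_zero, zero_add]
  refine ⟨y', ⟨hX _ y hyX, ?_⟩, ?_⟩
  · rw [← WithBot.add_finsetSup, ← hc, ← WithBot.coe_add, neg_add_cancel, WithBot.coe_zero]
  · calc normalizeMax (f y') = normalizeMax (fun i => (c : WithBot ℤ) + f y' i) :=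
          (normalizeMax_const_add c _).symm
      _ = normalizeMax (f fun j => (c : WithBot ℤ) + y' j) :=
          congrArg normalizeMax (hf _ y').symm
      _ = normalizeMax (f y) := by rw [← hy]
      _ = f y := normalizeMax_of_sup_eq_zero hfy

section MaxPlus

variable {r n p : ℕ}

lemma maxMulVec_const_add (A : Matrix (Fin r) (Fin n) (WithBot ℤ)) (c : WithBot ℤ)
    (y : Fin n → WithBot ℤ) :
    maxMulVec A (fun j => c + y j) = fun i => c + maxMulVec A y i := by
  funext i
  rw [maxMulVec, maxMulVec, WithBot.add_finsetSup]
  exact Finset.sup_congr rfl fun j _ => add_left_comm _ _ _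

lemma const_add_mem_ImM (B : Matrix (Fin n) (Fin p) (WithBot ℤ)) (c : WithBot ℤ)
    {x : Fin n → WithBot ℤ} (hx : x ∈ ImM B) : (fun i => c + x i) ∈ ImM B := by
  obtain ⟨y, rfl⟩ := hx
  exact ⟨fun j => c + y j, (maxMulVec_const_add B c y).symm⟩

lemma maxMulVec_maxMatMul (A : Matrix (Fin r) (Fin n) (WithBot ℤ))
    (B : Matrix (Fin n) (Fin p) (WithBot ℤ)) (y : Fin p → WithBot ℤ) :
    maxMulVec (maxMatMul A B) y = maxMulVec A (maxMulVec B y) := by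
  funext i
  simp only [maxMulVec, maxMatMul, Matrix.of_apply, WithBot.finsetSup_add,
    WithBot.add_finsetSup, add_assoc]
  exact Finset.sup_comm _ _ _

lemma ImM_maxMatMul (A : Matrix (Fin r) (Fin n) (WithBot ℤ))
    (B : Matrix (Fin n) (Fin p) (WithBot ℤ)) :
    ImM (maxMatMul A B) = maxMulVec A '' ImM B := by
  ext v
  constructor
  · rintro ⟨y, rfl⟩
    exact ⟨maxMulVec B y, ⟨y, rfl⟩, (maxMulVec_maxMatMul A B y).symm⟩
  · rintro ⟨w, ⟨y, rfl⟩, rfl⟩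
    exact ⟨y, (maxMulVec_maxMatMul A B y).symm⟩

end MaxPlus

/-- For `A ∈ ℤ_max^{r×n}` and a subsemimodule `Y ⊆ ℤ_max^n`,
`vol(A·Y) ≤ vol(Y)`; in particular `vol(Im(AB)) ≤ vol(Im B)` for every `B`. -/
theorem vol_image_le_vol_Y {r n p : ℕ} (A : Matrix (Fin r) (Fin n) (WithBot ℤ))
    (Y : Set (Fin n → WithBot ℤ)) (hY : IsSubsemimodule Y) :
    vol (maxMulVec A '' Y) ≤ vol Y ∧
    ∀ B : Matrix (Fin n) (Fin p) (WithBot ℤ), vol (ImM (maxMatMul A B)) ≤ vol (ImM B) := by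
  refine ⟨vol_image_le_of_const_add _ (maxMulVec_const_add A) Y fun c => hY.2.2 c, fun B => ?_⟩
  rw [ImM_maxMatMul]
  exact vol_image_le_of_const_add _ (maxMulVec_const_add A) _ fun c _ => const_add_mem_ImM B c
end

section
/- For every matrix A ∈ ℤ_max^{r×n}, the volume of A equals the volume of its transpose: vol(Im A) = vol(Im Aᵀ). -/
open Finset Matrix

namespace MaxPlus

/-- `−∞` is sent to `−∞` rather than `+∞`: in `dualVec` this makes the coordinates outside the
support of `x` drop out. -/
def negBot (a : WithBot ℤ) : WithBot ℤ := a.map Neg.neg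

@[simp] lemma negBot_bot : negBot ⊥ = ⊥ := rfl

@[simp] lemma negBot_coe (a : ℤ) : negBot a = ((-a : ℤ) : WithBot ℤ) := rfl

lemma add_negBot_self {a : WithBot ℤ} (ha : a ≠ ⊥) : a + negBot a = 0 := by
  lift a to ℤ using ha
  simp [← WithBot.coe_add]

lemma add_negBot_le_iff {a b c : WithBot ℤ} (hb : b ≠ ⊥) : a + negBot b ≤ c ↔ a ≤ c + b := by
  lift b to ℤ using hb
  induction a using WithBot.recBotCoe <;> induction c using WithBot.recBotCoe <;>
    simp [← WithBot.coe_add]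

lemma le_add_negBot_iff {a b c : WithBot ℤ} (hb : b ≠ ⊥) : c ≤ a + negBot b ↔ c + b ≤ a := by
  lift b to ℤ using hb
  induction a using WithBot.recBotCoe <;> induction c using WithBot.recBotCoe <;>
    simp [← WithBot.coe_add]

lemma le_negBot_comm {a b : WithBot ℤ} (ha : a ≠ ⊥) (hb : b ≠ ⊥) :
    a ≤ negBot b ↔ b ≤ negBot a := by
  lift a to ℤ using ha
  lift b to ℤ using hb
  simp only [negBot_coe, WithBot.coe_le_coe]
  omega

lemma negBot_add_coe (a : WithBot ℤ) (c : ℤ) :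
    negBot (a + c) = negBot a + ((-c : ℤ) : WithBot ℤ) := by
  induction a using WithBot.recBotCoe with
  | bot => rfl
  | coe a => simp only [negBot_coe, ← WithBot.coe_add, neg_add]

lemma sup_add_const {ι : Type*} (s : Finset ι) (f : ι → WithBot ℤ) (c : WithBot ℤ) :
    s.sup (fun i => f i + c) = s.sup f + c :=
  (apply_sup_eq_sup_comp (· + c) (fun a b => (max_add_add_right a b c).symm)
    (WithBot.bot_add c)).symm

lemma exists_eq_of_sup_eq_coe {ι : Type*} {s : Finset ι} {f : ι → WithBot ℤ} {v : ℤ}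
    (h : s.sup f = v) : ∃ i ∈ s, f i = v := by
  obtain ⟨i, hi, hfi⟩ := exists_mem_eq_sup s (nonempty_of_ne_empty (by rintro rfl; simp at h)) f
  exact ⟨i, hi, hfi ▸ h⟩

section MaxMulVec

variable {m k : ℕ}

lemma le_maxMulVec (A : Matrix (Fin m) (Fin k) (WithBot ℤ)) (y : Fin k → WithBot ℤ) (i : Fin m)
    (j : Fin k) : A i j + y j ≤ maxMulVec A y i :=
  le_sup (f := fun j => A i j + y j) (mem_univ j)

lemma maxMulVec_le_iff {A : Matrix (Fin m) (Fin k) (WithBot ℤ)} {y : Fin k → WithBot ℤ}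
    {i : Fin m} {c : WithBot ℤ} : maxMulVec A y i ≤ c ↔ ∀ j, A i j + y j ≤ c := by
  simp [maxMulVec]

lemma maxMulVec_add_const (A : Matrix (Fin m) (Fin k) (WithBot ℤ)) (y : Fin k → WithBot ℤ)
    (c : WithBot ℤ) : maxMulVec A (fun j => y j + c) = fun i => maxMulVec A y i + c := by
  funext i
  simp only [maxMulVec, ← add_assoc, sup_add_const]

lemma maxMulVec_sup (A : Matrix (Fin m) (Fin k) (WithBot ℤ)) (y y' : Fin k → WithBot ℤ) :
    maxMulVec A (y ⊔ y') = maxMulVec A y ⊔ maxMulVec A y' := by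
  funext i
  simp only [maxMulVec, Pi.sup_apply, ← sup_sup]
  congr 1
  funext j
  exact (max_add_add_left _ _ _).symm

lemma isSubsemimodule_imM (A : Matrix (Fin m) (Fin k) (WithBot ℤ)) : IsSubsemimodule (ImM A) := by
  refine ⟨⟨fun _ => ⊥, ?_⟩, ?_, ?_⟩
  · funext i
    simp [maxMulVec]
  · rintro _ ⟨y, rfl⟩ _ ⟨y', rfl⟩
    exact ⟨y ⊔ y', (maxMulVec_sup A y y').symm⟩
  · rintro c _ ⟨y, rfl⟩
    refine ⟨fun j => y j + c, ?_⟩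
    simp only [maxMulVec_add_const, add_comm c]

lemma col_mem_imM (A : Matrix (Fin m) (Fin k) (WithBot ℤ)) (j : Fin k) :
    (fun i => A i j) ∈ ImM A := by
  refine ⟨fun j' => if j' = j then 0 else ⊥, funext fun i => le_antisymm ?_ ?_⟩
  · simpa using le_maxMulVec A (fun j' => if j' = j then 0 else ⊥) i j
  · exact maxMulVec_le_iff.mpr fun j' => by split_ifs with h <;> simp [h]

lemma exists_ne_bot_of_mem_imM {A : Matrix (Fin m) (Fin k) (WithBot ℤ)} {x : Fin m → WithBot ℤ}
    (hx : x ∈ ImM A) {i : Fin m} (hi : x i ≠ ⊥) : ∃ j, A i j ≠ ⊥ := by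
  by_contra! h
  obtain ⟨y, rfl⟩ := hx
  exact hi (by simp [maxMulVec, h])

end MaxMulVec

section Duality

variable {m k : ℕ} {A : Matrix (Fin m) (Fin k) (WithBot ℤ)} {x : Fin m → WithBot ℤ}

def dualVec (A : Matrix (Fin m) (Fin k) (WithBot ℤ)) (x : Fin m → WithBot ℤ) : Fin k → WithBot ℤ :=
  maxMulVec Aᵀ fun i => negBot (x i)

lemma le_dualVec (i : Fin m) (j : Fin k) : A i j + negBot (x i) ≤ dualVec A x j :=
  le_maxMulVec Aᵀ (fun i => negBot (x i)) j i

lemma dualVec_le_iff {j : Fin k} {c : WithBot ℤ} :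
    dualVec A x j ≤ c ↔ ∀ i, A i j + negBot (x i) ≤ c :=
  maxMulVec_le_iff

theorem maxMulVec_negBot_dualVec (hx : x ∈ ImM A) {i : Fin m} (hi : x i ≠ ⊥) :
    maxMulVec A (fun j => negBot (dualVec A x j)) i = x i := by
  apply le_antisymm
  · refine maxMulVec_le_iff.mpr fun j => ?_
    by_cases hd : dualVec A x j = ⊥
    · simp [hd]
    rw [add_negBot_le_iff hd]
    calc A i j = x i + (A i j + negBot (x i)) := by rw [add_left_comm, add_negBot_self hi, add_zero]
      _ ≤ x i + dualVec A x j := by gcongr; exact le_dualVec i j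
  obtain ⟨y, hy⟩ := hx
  obtain ⟨v, hv⟩ := WithBot.ne_bot_iff_exists.mp hi
  obtain ⟨j, -, hj⟩ := exists_eq_of_sup_eq_coe (s := univ) (f := fun j => A i j + y j)
    (by rw [hv, hy]; rfl)
  have hAij : A i j ≠ ⊥ := (WithBot.add_ne_bot.mp (hj ▸ WithBot.coe_ne_bot)).1
  have hyj : y j ≠ ⊥ := (WithBot.add_ne_bot.mp (hj ▸ WithBot.coe_ne_bot)).2
  have hdual_le : dualVec A x j ≤ negBot (y j) := dualVec_le_iff.mpr fun i' => by
    by_cases hxi' : x i' = ⊥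
    · simp [hxi']
    rw [add_negBot_le_iff hxi', add_comm, le_add_negBot_iff hyj, hy]
    exact le_maxMulVec A y i' j
  have hdual : dualVec A x j ≠ ⊥ := ne_bot_of_le_ne_bot
    (WithBot.add_ne_bot.mpr ⟨hAij, by simp [← hv]⟩) (le_dualVec i j)
  calc x i = A i j + y j := by rw [← hv, hj]
    _ ≤ A i j + negBot (dualVec A x j) := by
      gcongr
      exact (le_negBot_comm hdual hyj).mp hdual_le
    _ ≤ maxMulVec A (fun j => negBot (dualVec A x j)) i :=
      le_maxMulVec A (fun j => negBot (dualVec A x j)) i j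

end Duality

section Normalize

variable {k : ℕ} {v w : Fin k → WithBot ℤ}

def normalize (v : Fin k → WithBot ℤ) : Fin k → WithBot ℤ :=
  fun j => v j + ((-(univ.sup v).unbotD 0 : ℤ) : WithBot ℤ)

lemma sup_normalize (hv : univ.sup v ≠ ⊥) : univ.sup (normalize v) = 0 := by
  obtain ⟨M, hM⟩ := WithBot.ne_bot_iff_exists.mp hv
  unfold normalize
  simp only [sup_add_const, ← hM, WithBot.unbotD_coe, ← WithBot.coe_add, add_neg_cancel,
    WithBot.coe_zero]

lemma normalize_mem {X : Set (Fin k → WithBot ℤ)} (hX : IsSubsemimodule X) (hv : v ∈ X) :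
    normalize v ∈ X := by
  unfold normalize
  simpa only [add_comm] using hX.2.2 ((-(univ.sup v).unbotD 0 : ℤ)) v hv

lemma exists_eq_add_of_normalize_eq (h : normalize v = normalize w) :
    ∃ δ : ℤ, ∀ j, v j = w j + δ := by
  refine ⟨(univ.sup v).unbotD 0 - (univ.sup w).unbotD 0, fun j => ?_⟩
  have hj := congrFun h j
  simp only [normalize] at hj
  generalize v j = a at hj ⊢
  generalize w j = b at hj ⊢
  induction a using WithBot.recBotCoe <;> induction b using WithBot.recBotCoe <;>
    simp [← WithBot.coe_add] at hj ⊢; omega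

end Normalize

section Volume

variable {m k : ℕ} {A : Matrix (Fin m) (Fin k) (WithBot ℤ)} {x x' : Fin m → WithBot ℤ}

def normalizedIm (A : Matrix (Fin m) (Fin k) (WithBot ℤ)) : Set (Fin m → WithBot ℤ) :=
  {x ∈ ImM A | univ.sup x = 0}

lemma vol_imM (A : Matrix (Fin m) (Fin k) (WithBot ℤ)) : vol (ImM A) = (normalizedIm A).encard :=
  rfl

def dualMap (A : Matrix (Fin m) (Fin k) (WithBot ℤ)) (x : Fin m → WithBot ℤ) : Fin k → WithBot ℤ :=
  normalize (dualVec A x)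

lemma exists_ne_bot_of_sup_eq_zero (h : univ.sup x = 0) : ∃ i, x i ≠ ⊥ := by
  obtain ⟨i, -, hi⟩ := exists_eq_of_sup_eq_coe (v := 0) h
  exact ⟨i, by simp [hi]⟩

lemma dualMap_mem (hx : x ∈ normalizedIm A) : dualMap A x ∈ normalizedIm Aᵀ := by
  refine ⟨normalize_mem (isSubsemimodule_imM Aᵀ) ⟨_, rfl⟩, sup_normalize fun hbot => ?_⟩
  obtain ⟨i, hi⟩ := exists_ne_bot_of_sup_eq_zero hx.2
  rw [Finset.sup_eq_bot_iff] at hbot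
  apply hi
  rw [← maxMulVec_negBot_dualVec hx.1 hi]
  simp [maxMulVec, hbot]

lemma eq_of_dualMap_eq (hx : x ∈ normalizedIm A) (hx' : x' ∈ normalizedIm A)
    (hsupp : ∀ i, x i = ⊥ ↔ x' i = ⊥) (h : dualMap A x = dualMap A x') : x = x' := by
  obtain ⟨δ, hδ⟩ := exists_eq_add_of_normalize_eq h
  have hshift : ∀ i, x i = x' i + ((-δ : ℤ) : WithBot ℤ) := by
    intro i
    by_cases hi : x i = ⊥
    · simp [hi, (hsupp i).mp hi]
    have hi' : x' i ≠ ⊥ := fun h => hi ((hsupp i).mpr h)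
    rw [← maxMulVec_negBot_dualVec hx.1 hi, ← maxMulVec_negBot_dualVec hx'.1 hi']
    simp only [hδ, negBot_add_coe, maxMulVec_add_const]
  have hδ0 : δ = 0 := by
    have := congrArg univ.sup (funext hshift)
    rw [sup_add_const, hx.2, hx'.2] at this
    simpa [← WithBot.coe_zero, ← WithBot.coe_add] using this
  funext i
  simp [hshift i, hδ0]

/-- Adding `λ + A_{·j}` with `λ → −∞` moves the coordinate `i` without raising the maximum. -/
lemma normalizedIm_infinite (hx : x ∈ normalizedIm A) {i : Fin m} {j : Fin k} (hxi : x i = ⊥)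
    (hAij : A i j ≠ ⊥) : (normalizedIm A).Infinite := by
  obtain ⟨a, ha⟩ := WithBot.ne_bot_iff_exists.mp hAij
  obtain ⟨K, hK⟩ := WithBot.ne_bot_iff_exists.mp <|
    ne_bot_of_le_ne_bot hAij (le_sup (f := fun i' => A i' j) (mem_univ i))
  let f : ℕ → Fin m → WithBot ℤ := fun p => x ⊔ fun i' => ((-K - p : ℤ) : WithBot ℤ) + A i' j
  have hA := isSubsemimodule_imM A
  refine Set.infinite_of_injective_forall_mem (f := f) (fun p q hpq => ?_) fun p => ⟨?_, ?_⟩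
  · have := congrFun hpq i
    simp only [f, Pi.sup_apply, hxi, ← ha, ← WithBot.coe_add, bot_sup_eq, WithBot.coe_inj] at this
    omega
  · exact hA.2.1 _ hx.1 _ (hA.2.2 _ _ (col_mem_imM A j))
  · rw [sup_sup, hx.2, sup_eq_left]
    refine Finset.sup_le fun i' _ => ?_
    calc ((-K - p : ℤ) : WithBot ℤ) + A i' j ≤ ((-K - p : ℤ) : WithBot ℤ) + K := by
          gcongr
          exact hK ▸ le_sup (f := fun i' => A i' j) (mem_univ i')
      _ ≤ 0 := by norm_cast; omega

lemma normalizedIm_transpose_infinite (h : (normalizedIm A).Infinite) :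
    (normalizedIm Aᵀ).Infinite := by
  obtain ⟨s, hs⟩ : ∃ s : Set (Fin m), {x ∈ normalizedIm A | {i | x i = ⊥} = s}.Infinite := by
    by_contra! hfin
    exact h ((Set.finite_iUnion hfin).subset fun x hx => Set.mem_iUnion.mpr ⟨_, hx, rfl⟩)
  refine (hs.image (f := dualMap A) fun x hx x' hx' hxx' => ?_).mono ?_
  · exact eq_of_dualMap_eq hx.1 hx'.1 (fun i => Set.ext_iff.mp (hx.2.trans hx'.2.symm) i) hxx'
  · rintro _ ⟨x, hx, rfl⟩
    exact dualMap_mem hx.1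

lemma encard_normalizedIm_le : (normalizedIm A).encard ≤ (normalizedIm Aᵀ).encard := by
  by_cases hA : (normalizedIm A).Infinite
  · rw [(normalizedIm_transpose_infinite hA).encard_eq]
    exact le_top
  have hbot : ∀ x ∈ normalizedIm A, ∀ x' ∈ normalizedIm A, ∀ i, x i = ⊥ → x' i = ⊥ := by
    intro x hx x' hx' i hxi
    by_contra hx'i
    obtain ⟨j, hj⟩ := exists_ne_bot_of_mem_imM hx'.1 hx'i
    exact hA (normalizedIm_infinite hx hxi hj)
  exact Set.encard_le_encard_of_injOn (fun x hx => dualMap_mem hx) fun x hx x' hx' =>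
    eq_of_dualMap_eq hx hx' fun i => ⟨hbot x hx x' hx' i, hbot x' hx' x hx i⟩

end Volume

end MaxPlus

open Matrix in
/-- The volume of a matrix over `ℤ_max` equals the volume of its transpose:
`vol(Im A) = vol(Im Aᵀ)`. -/
theorem vol_imA_eq_vol_imAT {r n : ℕ} (A : Matrix (Fin r) (Fin n) (WithBot ℤ)) :
    vol (ImM A) = vol (ImM Aᵀ) := by
  rw [MaxPlus.vol_imM, MaxPlus.vol_imM]
  refine le_antisymm MaxPlus.encard_normalizedIm_le ?_
  simpa only [transpose_transpose] using MaxPlus.encard_normalizedIm_le (A := Aᵀ)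
end

section
/- Let K ∈ ℤ^{n×s} be a matrix all of whose entries are finite integers, viewed as a matrix over ℤ_max. Then vol(Im K) ≤ (Δ_H(K)+1)^n − Δ_H(K)^n, where the powers are ordinary integer powers. -/
/-- The additive Hilbert seminorm of `x ∈ ℤⁿ`: `‖x‖_H = max_i x_i − min_i x_i`
(a natural number since the max dominates the min). -/
def hilbertNorm {n : ℕ} [NeZero n] (x : Fin n → ℤ) : ℕ :=
  (Finset.univ.sup' Finset.univ_nonempty x - Finset.univ.inf' Finset.univ_nonempty x).toNat

/-- `Δ_H(K)`: the maximum of the Hilbert seminorms of the columns of `K ∈ ℤ^{n×s}`. -/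
def deltaH {n s : ℕ} [NeZero n] [NeZero s] (K : Matrix (Fin n) (Fin s) ℤ) : ℕ :=
  Finset.univ.sup' Finset.univ_nonempty fun j => hilbertNorm fun i => K i j

/-- A matrix with finite integer entries, viewed as a matrix over `ℤ_max`. -/
def toZmax {n s : ℕ} (K : Matrix (Fin n) (Fin s) ℤ) : Matrix (Fin n) (Fin s) (WithBot ℤ) :=
  Matrix.of fun i j => (K i j : WithBot ℤ)

open Finset

noncomputable def normalizedBox (n d : ℕ) : Finset (Fin n → ℤ) :=
  Fintype.piFinset (fun _ => Icc (-(d : ℤ)) 0) \ Fintype.piFinset (fun _ => Icc (-(d : ℤ)) (-1))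

theorem card_normalizedBox (n d : ℕ) : #(normalizedBox n d) = (d + 1) ^ n - d ^ n := by
  have hsub : Fintype.piFinset (fun _ : Fin n => Icc (-(d : ℤ)) (-1)) ⊆
      Fintype.piFinset (fun _ => Icc (-(d : ℤ)) 0) :=
    Fintype.piFinset_subset _ _ fun _ => Icc_subset_Icc_right (by norm_num)
  rw [normalizedBox, card_sdiff_of_subset hsub, Fintype.card_piFinset, Fintype.card_piFinset]
  simp only [Int.card_Icc, prod_const, card_univ, Fintype.card_fin]
  congr 2 <;> omega

theorem mem_normalizedBox {n d : ℕ} {f : Fin n → ℤ} :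
    f ∈ normalizedBox n d ↔ (∀ i, -(d : ℤ) ≤ f i ∧ f i ≤ 0) ∧ ∃ i, f i = 0 := by
  simp only [normalizedBox, mem_sdiff, Fintype.mem_piFinset, mem_Icc, not_forall]
  refine and_congr_right fun hbox => exists_congr fun i => ?_
  have := hbox i
  omega

theorem sub_le_hilbertNorm {n : ℕ} [NeZero n] (x : Fin n → ℤ) (i j : Fin n) :
    x i - x j ≤ hilbertNorm x := by
  have hmax := le_sup' x (mem_univ i)
  have hmin := inf'_le x (mem_univ j)
  rw [hilbertNorm]
  omega

theorem hilbertNorm_col_le_deltaH {n s : ℕ} [NeZero n] [NeZero s]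
    (K : Matrix (Fin n) (Fin s) ℤ) (j : Fin s) : hilbertNorm (fun i => K i j) ≤ deltaH K :=
  le_sup' (fun j => hilbertNorm fun i => K i j) (mem_univ j)

theorem le_maxMulVec {m k : ℕ} (A : Matrix (Fin m) (Fin k) (WithBot ℤ))
    (y : Fin k → WithBot ℤ) (i : Fin m) (j : Fin k) : A i j + y j ≤ maxMulVec A y i :=
  le_sup (f := fun j => A i j + y j) (mem_univ j)

theorem exists_maxMulVec_eq {m k : ℕ} [NeZero k] (A : Matrix (Fin m) (Fin k) (WithBot ℤ))
    (y : Fin k → WithBot ℤ) (i : Fin m) : ∃ j, maxMulVec A y i = A i j + y j := by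
  obtain ⟨j, -, hj⟩ := exists_mem_eq_sup univ univ_nonempty fun j => A i j + y j
  exact ⟨j, hj⟩

theorem le_deltaH_add_of_mem_imM {n s : ℕ} [NeZero n] [NeZero s]
    {K : Matrix (Fin n) (Fin s) ℤ} {x : Fin n → WithBot ℤ} (hx : x ∈ ImM (toZmax K))
    (i i' : Fin n) : x i' ≤ (deltaH K : WithBot ℤ) + x i := by
  obtain ⟨y, rfl⟩ := hx
  obtain ⟨j, hj⟩ := exists_maxMulVec_eq (toZmax K) y i'
  have hcol : K i' j ≤ deltaH K + K i j := by
    have := (sub_le_hilbertNorm (fun i => K i j) i' i).trans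
      (Int.ofNat_le.mpr (hilbertNorm_col_le_deltaH K j))
    omega
  calc maxMulVec (toZmax K) y i' = (K i' j : WithBot ℤ) + y j := hj
    _ ≤ ((deltaH K + K i j : ℤ) : WithBot ℤ) + y j := by gcongr; exact_mod_cast hcol
    _ = (deltaH K : WithBot ℤ) + (toZmax K i j + y j) := by
        rw [WithBot.coe_add, add_assoc]; rfl
    _ ≤ (deltaH K : WithBot ℤ) + maxMulVec (toZmax K) y i := by
        gcongr; exact le_maxMulVec _ y i j

theorem exists_mem_normalizedBox_of_sup_eq_zero {n d : ℕ} {x : Fin n → WithBot ℤ}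
    (hsup : univ.sup x = 0) (hspread : ∀ i i', x i' ≤ (d : WithBot ℤ) + x i) :
    ∃ f ∈ normalizedBox n d, x = fun i => (f i : WithBot ℤ) := by
  have hne : (univ : Finset (Fin n)).Nonempty := by
    by_contra h
    simp [not_nonempty_iff_eq_empty.mp h] at hsup
  obtain ⟨i₀, -, hi₀⟩ := exists_mem_eq_sup univ hne x
  have hcoord : ∀ i, ∃ z : ℤ, x i = z ∧ -(d : ℤ) ≤ z ∧ z ≤ 0 := by
    intro i
    have hle : x i ≤ 0 := hsup ▸ le_sup (mem_univ i)
    have hge : (0 : WithBot ℤ) ≤ (d : WithBot ℤ) + x i := hsup ▸ hi₀ ▸ hspread i i₀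
    induction hxi : x i with
    | bot => simp [hxi] at hge
    | coe z =>
      rw [hxi] at hle hge
      refine ⟨z, rfl, ?_, by exact_mod_cast hle⟩
      have : (0 : ℤ) ≤ d + z := by exact_mod_cast hge
      omega
  choose f hf using hcoord
  refine ⟨f, mem_normalizedBox.mpr ⟨fun i => (hf i).2, i₀, ?_⟩, funext fun i => (hf i).1⟩
  exact_mod_cast (hf i₀).1.symm.trans (hi₀.symm.trans hsup)

/-- For a matrix `K ∈ ℤ^{n×s}` with all entries finite, viewed over `ℤ_max`,
`vol(Im K) ≤ (Δ_H(K)+1)^n − Δ_H(K)^n` (ordinary integer powers). -/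
theorem vol_imK_le_hilbert_bound {n s : ℕ} [NeZero n] [NeZero s]
    (K : Matrix (Fin n) (Fin s) ℤ) :
    vol (ImM (toZmax K)) ≤ (((deltaH K + 1) ^ n - deltaH K ^ n : ℕ) : ℕ∞) := by
  have hsub : {x ∈ ImM (toZmax K) | univ.sup x = (0 : WithBot ℤ)} ⊆
      (fun f : Fin n → ℤ => fun i => (f i : WithBot ℤ)) '' ↑(normalizedBox n (deltaH K)) := by
    rintro x ⟨hx, hsup⟩
    obtain ⟨f, hf, rfl⟩ :=
      exists_mem_normalizedBox_of_sup_eq_zero hsup (le_deltaH_add_of_mem_imM hx)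
    exact ⟨f, hf, rfl⟩
  calc vol (ImM (toZmax K))
      ≤ ((fun f : Fin n → ℤ => fun i => (f i : WithBot ℤ)) ''
          ↑(normalizedBox n (deltaH K))).encard := Set.encard_mono hsub
    _ ≤ (↑(normalizedBox n (deltaH K)) : Set (Fin n → ℤ)).encard := Set.encard_image_le _ _
    _ = _ := by rw [Set.encard_coe_eq_coe_finsetCard, card_normalizedBox]
end
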